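/- arXiv:2302.06261 — 11 statements merged into one kernel-verified Lean document; each statement's English description precedes it below -/
import Mathlib

section
/- For every p with 0 < p < 1, the map f_p is strictly monotone increasing on the interval [0,1]. -/
noncomputable def f (p x : ℝ) : ℝ := p * x / (1 - p * x + (p * x) ^ 2)

/-- for 0 < p < 1, f_p is strictly monotone increasing on [0,1]. -/
theorem f_strictMonoOn (p : ℝ) (hp : 0 < p) (hp1 : p < 1) :
    StrictMonoOn (f p) (Set.Icc (0:ℝ) 1) := by
  intro x hx y hy hxy
  obtain ⟨hx0, hx1⟩ := hx
  obtain ⟨hy0, hy1⟩ := hy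
  have hdx : 0 < 1 - p * x + (p * x) ^ 2 := by nlinarith [sq_nonneg (p * x - 1)]
  have hdy : 0 < 1 - p * y + (p * y) ^ 2 := by nlinarith [sq_nonneg (p * y - 1)]
  unfold f
  rw [div_lt_div_iff₀ hdx hdy]
  have hpx : p * x < 1 := by nlinarith
  have hpy : p * y < 1 := by nlinarith
  have h1 : p * x * (p * y) < 1 := by nlinarith [mul_nonneg hp.le hx0, mul_nonneg hp.le hy0]
  nlinarith [mul_pos (mul_pos hp (sub_pos.mpr hxy)) (sub_pos.mpr h1)]
end

section
/- Let 0 < p < 3/4. Then for x ∈ [0,1], f_p(x) = x if and only if x = 0; that is, 0 is the unique fixed point of f_p in [0,1]. -/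
/-- for 0 < p < 3/4, the unique fixed point of f_p in [0,1] is 0. -/
theorem fixed_points_small_p (p : ℝ) (hp : 0 < p) (hp1 : p < 3/4)
    (x : ℝ) (hx : x ∈ Set.Icc (0:ℝ) 1) :
    f p x = x ↔ x = 0 := by
  have hd : 1 - p * x + (p * x) ^ 2 > 0 := by nlinarith [sq_nonneg (p * x - 1/2)]
  unfold f
  rw [div_eq_iff (ne_of_gt hd)]
  constructor
  · intro h
    by_contra hx0
    have hq : p ^ 2 * x ^ 2 - p * x + 1 - p > 0 := by
      nlinarith [sq_nonneg (2 * p * x - 1)]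
    have : x * (p ^ 2 * x ^ 2 - p * x + 1 - p) = 0 := by ring_nf; nlinarith [h]
    rcases mul_eq_zero.mp this with h1 | h1
    · exact hx0 h1
    · linarith
  · intro h; subst h; ring
end

section
/- Let 3/4 < p < 1. Then for x ∈ [0,1], f_p(x) = x if and only if x = 0, or x = (1 - √(4p-3))/(2p), or x = (1 + √(4p-3))/(2p); moreover all three of these values lie in [0,1]. -/
lemma f_denom_pos (p x : ℝ) : 0 < 1 - p * x + (p * x) ^ 2 := by
  nlinarith [sq_nonneg (2 * (p * x) - 1)]

lemma f_eq_self_iff_mul_quadratic_eq_zero (p x : ℝ) :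
    f p x = x ↔ x * (p ^ 2 * (x * x) + -p * x + (1 - p)) = 0 := by
  rw [f, div_eq_iff (f_denom_pos p x).ne']
  constructor <;> intro h <;> linear_combination -h

lemma f_eq_self_iff {p : ℝ} (hp : 3 / 4 ≤ p) (x : ℝ) :
    f p x = x ↔ x = 0 ∨ x = (1 - √(4 * p - 3)) / (2 * p) ∨ x = (1 + √(4 * p - 3)) / (2 * p) := by
  have hp0 : p ≠ 0 := by linarith
  have hdiscrim : discrim (p ^ 2) (-p) (1 - p) = (p * √(4 * p - 3)) * (p * √(4 * p - 3)) := by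
    rw [discrim, mul_mul_mul_comm, Real.mul_self_sqrt (by linarith)]
    ring
  rw [f_eq_self_iff_mul_quadratic_eq_zero, mul_eq_zero,
    quadratic_eq_zero_iff (pow_ne_zero 2 hp0) hdiscrim, or_comm (a := x = _ / _)]
  field_simp

lemma sqrt_four_mul_sub_three_le_one {p : ℝ} (hp : p ≤ 1) : √(4 * p - 3) ≤ 1 :=
  Real.sqrt_le_one.mpr (by linarith)

lemma sqrt_four_mul_sub_three_le {p : ℝ} (hp : 1 / 2 ≤ p) : √(4 * p - 3) ≤ 2 * p - 1 :=
  (Real.sqrt_le_left (by linarith)).mpr (by nlinarith [sq_nonneg (p - 1)])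

lemma one_sub_sqrt_div_mem_Icc {p : ℝ} (hp : 3 / 4 ≤ p) (hp1 : p ≤ 1) :
    (1 - √(4 * p - 3)) / (2 * p) ∈ Set.Icc (0 : ℝ) 1 := by
  have := sqrt_four_mul_sub_three_le_one hp1
  have := Real.sqrt_nonneg (4 * p - 3)
  exact ⟨div_nonneg (by linarith) (by linarith), (div_le_one (by linarith)).mpr (by linarith)⟩

lemma one_add_sqrt_div_mem_Icc {p : ℝ} (hp : 3 / 4 ≤ p) :
    (1 + √(4 * p - 3)) / (2 * p) ∈ Set.Icc (0 : ℝ) 1 := by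
  have := sqrt_four_mul_sub_three_le (by linarith : 1 / 2 ≤ p)
  have := Real.sqrt_nonneg (4 * p - 3)
  exact ⟨div_nonneg (by linarith) (by linarith), (div_le_one (by linarith)).mpr (by linarith)⟩

/-- for 3/4 < p < 1, the fixed points of f_p in [0,1] are
0, (1 - √(4p-3))/(2p) and (1 + √(4p-3))/(2p), all of which lie in [0,1]. -/
theorem fixed_points_large_p (p : ℝ) (hp : 3/4 < p) (hp1 : p < 1) :
    (∀ x ∈ Set.Icc (0:ℝ) 1,
      (f p x = x ↔ x = 0 ∨ x = (1 - Real.sqrt (4*p - 3)) / (2*p)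
        ∨ x = (1 + Real.sqrt (4*p - 3)) / (2*p)))
    ∧ (0:ℝ) ∈ Set.Icc (0:ℝ) 1
    ∧ (1 - Real.sqrt (4*p - 3)) / (2*p) ∈ Set.Icc (0:ℝ) 1
    ∧ (1 + Real.sqrt (4*p - 3)) / (2*p) ∈ Set.Icc (0:ℝ) 1 :=
  ⟨fun x _ => f_eq_self_iff hp.le x, Set.left_mem_Icc.mpr zero_le_one,
    one_sub_sqrt_div_mem_Icc hp.le hp1.le, one_add_sqrt_div_mem_Icc hp.le⟩
end

section
/- Let 3/4 < p < 1 and set x⁺ = (1 + √(4p-3))/(2p). Then the derivative of f_p at x⁺ equals (3 - √(4p-3))/(2p) - 1, and this value lies strictly between 0 and 1; hence x⁺ is a hyperbolic attracting (stable) fixed point of f_p. -/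
/-- for 3/4 < p < 1, f_p'(x⁺) = (3 - √(4p-3))/(2p) - 1 ∈ (0,1),
hence x⁺ = (1 + √(4p-3))/(2p) is an attracting (stable) fixed point. -/
theorem deriv_at_stable_fixed_point (p : ℝ) (hp : 3/4 < p) (hp1 : p < 1) :
    deriv (f p) ((1 + Real.sqrt (4*p - 3)) / (2*p))
        = (3 - Real.sqrt (4*p - 3)) / (2*p) - 1
    ∧ 0 < (3 - Real.sqrt (4*p - 3)) / (2*p) - 1
    ∧ (3 - Real.sqrt (4*p - 3)) / (2*p) - 1 < 1
    ∧ |deriv (f p) ((1 + Real.sqrt (4*p - 3)) / (2*p))| < 1 := by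
  have hp0 : (0:ℝ) < p := by linarith
  set s := Real.sqrt (4*p - 3) with hsdef
  set x := (1 + s) / (2*p) with hxdef
  have hs2 : s ^ 2 = 4*p - 3 := Real.sq_sqrt (by linarith)
  have hs0 : 0 < s := Real.sqrt_pos.mpr (by linarith)
  have hpx : p * x = (1 + s) / 2 := by
    rw [hxdef]; field_simp
  have hD : 1 - p * x + (p * x) ^ 2 = p := by
    rw [hpx]; nlinarith [hs2]
  have hDne : 1 - p * x + (p * x) ^ 2 ≠ 0 := by rw [hD]; exact ne_of_gt hp0
  have h1 : HasDerivAt (fun y : ℝ => p * y) p x := by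
    simpa using (hasDerivAt_id x).const_mul p
  have h2 : HasDerivAt (fun y : ℝ => 1 - p * y + (p * y) ^ 2)
      ((0 - p) + 2 * (p * x) ^ 1 * p) x :=
    ((hasDerivAt_const x 1).sub h1).add (h1.pow 2)
  have hdiv : HasDerivAt (f p)
      ((p * (1 - p * x + (p * x) ^ 2) - p * x * ((0 - p) + 2 * (p * x) ^ 1 * p))
        / (1 - p * x + (p * x) ^ 2) ^ 2) x := h1.div h2 hDne
  have hderiv : deriv (f p) x = (3 - s) / (2*p) - 1 := by
    rw [hdiv.deriv, hD, hpx]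
    field_simp
    nlinarith [hs2]
  have hlt : s < 3 - 2*p := by
    rw [hsdef]
    exact (Real.sqrt_lt' (by linarith)).mpr (by nlinarith)
  have hb1 : 0 < (3 - s) / (2*p) - 1 := by
    rw [sub_pos, lt_div_iff₀ (by linarith)]; linarith
  have hb2 : (3 - s) / (2*p) - 1 < 1 := by
    rw [sub_lt_iff_lt_add, div_lt_iff₀ (by linarith)]; linarith
  refine ⟨hderiv, hb1, hb2, ?_⟩
  rw [hderiv, abs_lt]
  constructor <;> linarith
end

section
/- Let 3/4 < p < 1 and set x⁻ = (1 - √(4p-3))/(2p). Then the derivative of f_p at x⁻ equals (3 + √(4p-3))/(2p) - 1, and this value is strictly greater than 1; hence x⁻ is a hyperbolic repelling (unstable) fixed point of f_p. -/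
open Real

lemma one_sub_add_sq_pos (u : ℝ) : 0 < 1 - u + u ^ 2 := by
  nlinarith [sq_nonneg (u - 1 / 2)]

lemma hasDerivAt_f (p x : ℝ) :
    HasDerivAt (f p) (p * (1 - (p * x) ^ 2) / (1 - p * x + (p * x) ^ 2) ^ 2) x := by
  have hu : HasDerivAt (fun y => p * y) p x := by simpa using (hasDerivAt_id x).const_mul p
  have hden : HasDerivAt (fun y => 1 - p * y + (p * y) ^ 2) (2 * (p * x) * p - p) x :=
    (((hasDerivAt_const x 1).sub hu).add (hu.pow 2)).congr_deriv (by ring)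
  exact (hu.div hden (one_sub_add_sq_pos (p * x)).ne').congr_deriv (by ring)

/-- Both fixed points `(1 ± √(4p-3)) / (2p)` are of this form, with `s = ∓√(4p-3)`. -/
lemma deriv_f_of_sq_eq {p s : ℝ} (hp : p ≠ 0) (hs : s ^ 2 = 4 * p - 3) :
    deriv (f p) ((1 - s) / (2 * p)) = (3 + s) / (2 * p) - 1 := by
  have hu : p * ((1 - s) / (2 * p)) = (1 - s) / 2 := by field_simp
  have hden : 1 - (1 - s) / 2 + ((1 - s) / 2) ^ 2 = p := by linear_combination hs / 4
  rw [(hasDerivAt_f p _).deriv, hu, hden]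
  field_simp
  linear_combination (-1) * hs

lemma one_lt_three_add_sqrt_div_sub_one {p : ℝ} (hp : 3 / 4 < p) (hp1 : p < 1) :
    1 < (3 + √(4 * p - 3)) / (2 * p) - 1 := by
  have hs : √(4 * p - 3) ^ 2 = 4 * p - 3 := sq_sqrt (by linarith)
  have hs0 : 0 < √(4 * p - 3) := sqrt_pos.2 (by linarith)
  have hs1 : √(4 * p - 3) < 1 := by nlinarith
  rw [lt_sub_iff_add_lt, lt_div_iff₀ (by positivity)]
  nlinarith

/-- for 3/4 < p < 1, f_p'(x⁻) = (3 + √(4p-3))/(2p) - 1 > 1,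
hence x⁻ = (1 - √(4p-3))/(2p) is a repelling (unstable) fixed point. -/
theorem deriv_at_unstable_fixed_point (p : ℝ) (hp : 3/4 < p) (hp1 : p < 1) :
    deriv (f p) ((1 - Real.sqrt (4*p - 3)) / (2*p))
        = (3 + Real.sqrt (4*p - 3)) / (2*p) - 1
    ∧ 1 < (3 + Real.sqrt (4*p - 3)) / (2*p) - 1
    ∧ 1 < |deriv (f p) ((1 - Real.sqrt (4*p - 3)) / (2*p))| := by
  have hderiv := deriv_f_of_sq_eq (by linarith) (sq_sqrt (by linarith : (0 : ℝ) ≤ 4 * p - 3))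
  have hgt := one_lt_three_add_sqrt_div_sub_one hp hp1
  exact ⟨hderiv, hgt, hderiv ▸ hgt.trans_le (le_abs_self _)⟩
end

section
/- Let 0 < p < 3/4. Then f_p(x) < x for every x ∈ (0,1]. -/
/-- for 0 < p < 3/4, f_p(x) < x for every x ∈ (0,1]. -/
theorem f_lt_self (p : ℝ) (hp : 0 < p) (hp1 : p < 3/4)
    (x : ℝ) (hx : x ∈ Set.Ioc (0:ℝ) 1) :
    f p x < x := by
  obtain ⟨hx0, hx1⟩ := hx
  have hD : 0 < 1 - p * x + (p * x) ^ 2 := by nlinarith [sq_nonneg (p * x - 1/2)]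
  rw [f, div_lt_iff₀ hD]
  nlinarith [sq_nonneg (p * x - 1/2), mul_pos hp hx0, sq_nonneg (p*x)]
end

section
/- Let 0 < p < 3/4. Then for every initial frequency x₀ ∈ [0,1], the sequence of iterates f_p^[n](x₀) converges to 0 as n → ∞; that is, with cytoplasmic incompatibility below 3/4, the Wolbachia infection is eliminated from the population in the long run regardless of the initial infected frequency. -/
/-- for 0 < p < 3/4, the iterates of f_p starting from any
x₀ ∈ [0,1] converge to 0. -/
theorem iterates_tendsto_zero (p : ℝ) (hp : 0 < p) (hp1 : p < 3/4)
    (x₀ : ℝ) (hx₀ : x₀ ∈ Set.Icc (0:ℝ) 1) :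
    Filter.Tendsto (fun n => (f p)^[n] x₀) Filter.atTop (nhds 0) := by
  have hdenom : ∀ x : ℝ, 0 < 1 - p * x + (p * x) ^ 2 := by
    intro x; nlinarith [sq_nonneg (p * x - 1/2)]
  have hnonneg : ∀ x : ℝ, 0 ≤ x → 0 ≤ f p x := by
    intro x hx
    exact div_nonneg (by positivity) (hdenom x).le
  have hcontr : ∀ x : ℝ, 0 ≤ x → f p x ≤ (4 * p / 3) * x := by
    intro x hx
    rw [f, div_le_iff₀ (hdenom x)]
    nlinarith [sq_nonneg (2 * (p * x) - 1), mul_nonneg hp.le hx,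
      sq_nonneg (p * x), mul_nonneg (mul_nonneg hp.le hx) (sq_nonneg (p * x))]
  have hiter : ∀ n : ℕ, 0 ≤ (f p)^[n] x₀ ∧ (f p)^[n] x₀ ≤ (4 * p / 3) ^ n * x₀ := by
    intro n
    induction n with
    | zero => simpa using hx₀.1
    | succ n ih =>
      rw [Function.iterate_succ_apply']
      refine ⟨hnonneg _ ih.1, ?_⟩
      calc f p ((f p)^[n] x₀) ≤ (4 * p / 3) * ((f p)^[n] x₀) := hcontr _ ih.1
        _ ≤ (4 * p / 3) * ((4 * p / 3) ^ n * x₀) := by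
            apply mul_le_mul_of_nonneg_left ih.2 (by positivity)
        _ = (4 * p / 3) ^ (n + 1) * x₀ := by ring
  have hlim : Filter.Tendsto (fun n : ℕ => (4 * p / 3) ^ n * x₀) Filter.atTop (nhds 0) := by
    have := (tendsto_pow_atTop_nhds_zero_of_lt_one (by positivity : (0:ℝ) ≤ 4 * p / 3)
      (by linarith)).mul_const x₀
    simpa using this
  exact squeeze_zero (fun n => (hiter n).1) (fun n => (hiter n).2) hlim
end

section
/- Let p = 1. Then f_1(x) > x for every x ∈ (0,1), and for every initial frequency x₀ ∈ (0,1] the sequence of iterates f_1^[n](x₀) converges to 1 as n → ∞; that is, with full cytoplasmic incompatibility, any positive initial infected frequency leads to fixation of the Wolbachia infection. -/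
lemma hden (x : ℝ) : 0 < 1 - x + x ^ 2 := by nlinarith [sq_nonneg (x - 1/2)]

lemma f_one_eq : f 1 = fun x : ℝ => x / (1 - x + x ^ 2) := by
  funext x; simp [f]

lemma f_one_maps {x : ℝ} (hx : x ∈ Set.Ioc (0:ℝ) 1) : f 1 x ∈ Set.Ioc (0:ℝ) 1 := by
  obtain ⟨h0, h1⟩ := hx
  rw [f_one_eq]
  constructor
  · exact div_pos h0 (hden x)
  · rw [div_le_one (hden x)]; nlinarith [sq_nonneg (1 - x)]

lemma f_one_le {x : ℝ} (hx : x ∈ Set.Ioc (0:ℝ) 1) : x ≤ f 1 x := by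
  obtain ⟨h0, h1⟩ := hx
  rw [f_one_eq, le_div_iff₀ (hden x)]
  nlinarith

/-- for p = 1, f_1(x) > x on (0,1), and the iterates from any
x₀ ∈ (0,1] converge to 1 (fixation). -/
theorem iterates_tendsto_one_for_full_CI :
    (∀ x ∈ Set.Ioo (0:ℝ) 1, x < f 1 x)
    ∧ ∀ x₀ ∈ Set.Ioc (0:ℝ) 1,
        Filter.Tendsto (fun n => (f 1)^[n] x₀) Filter.atTop (nhds 1) := by
  constructor
  · intro x ⟨h0, h1⟩
    rw [f_one_eq, lt_div_iff₀ (hden x)]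
    nlinarith [mul_pos (mul_pos h0 h0) (sub_pos.mpr h1)]
  · intro x₀ hx₀
    set a : ℕ → ℝ := fun n => (f 1)^[n] x₀ with ha
    have hmem : ∀ n, a n ∈ Set.Ioc (0:ℝ) 1 := by
      intro n
      induction n with
      | zero => exact hx₀
      | succ k ih =>
        have : a (k+1) = f 1 (a k) := Function.iterate_succ_apply' _ _ _
        rw [this]; exact f_one_maps ih
    have hmono : Monotone a := by
      apply monotone_nat_of_le_succ
      intro n
      have : a (n+1) = f 1 (a n) := Function.iterate_succ_apply' _ _ _
      rw [this]; exact f_one_le (hmem n)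
    have hbdd : BddAbove (Set.range a) := by
      refine ⟨1, ?_⟩
      rintro y ⟨n, rfl⟩
      exact (hmem n).2
    have htend : Filter.Tendsto a Filter.atTop (nhds (⨆ n, a n)) :=
      tendsto_atTop_ciSup hmono hbdd
    set L := ⨆ n, a n with hL
    have hL1 : L ≤ 1 := ciSup_le fun n => (hmem n).2
    have hL0 : 0 < L := lt_of_lt_of_le hx₀.1 (le_ciSup hbdd 0)
    have hcont : Continuous (f 1) := by
      rw [f_one_eq]
      exact continuous_id.div (by continuity) fun x => (hden x).ne'
    have h1 : Filter.Tendsto (fun n => f 1 (a n)) Filter.atTop (nhds (f 1 L)) :=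
      (hcont.continuousAt).tendsto.comp htend
    have h2 : Filter.Tendsto (fun n => f 1 (a n)) Filter.atTop (nhds L) := by
      have : (fun n => f 1 (a n)) = fun n => a (n+1) := by
        funext n; exact (Function.iterate_succ_apply' _ _ _).symm
      rw [this]
      exact htend.comp (Filter.tendsto_add_atTop_nat 1)
    have hfix : f 1 L = L := tendsto_nhds_unique h1 h2
    have hLeq : L = 1 := by
      rw [f_one_eq] at hfix
      have := (div_eq_iff (hden L).ne').mp hfix
      nlinarith [mul_pos hL0 hL0]
    rw [← hLeq]
    exact htend
end

section
/- Let p = 3/4. Then for every initial frequency x₀ ∈ [2/3, 1], the sequence of iterates f_{3/4}^[n](x₀) converges to 2/3 as n → ∞; that is, for initial values above 2/3 the non-hyperbolic fixed point 2/3 behaves as an attracting fixed point. -/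
lemma denom_pos (x : ℝ) : 0 < 1 - (3/4) * x + ((3/4) * x) ^ 2 := by
  nlinarith [sq_nonneg ((3/4) * x - 1/2)]

lemma step_lemma {x : ℝ} (hx : x ∈ Set.Icc (2/3 : ℝ) 1) :
    f (3/4) x ∈ Set.Icc (2/3 : ℝ) 1 ∧ f (3/4) x ≤ x := by
  obtain ⟨h1, h2⟩ := hx
  have hd := denom_pos x
  have hle : f (3/4) x ≤ x := by
    unfold f
    rw [div_le_iff₀ hd]
    nlinarith [sq_nonneg ((3/4) * x - 1/2)]
  refine ⟨⟨?_, hle.trans h2⟩, hle⟩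
  unfold f
  rw [le_div_iff₀ hd]
  nlinarith [mul_nonneg (sub_nonneg.2 h1) (sub_nonneg.2 h2)]

/-- for p = 3/4, the iterates from any x₀ ∈ [2/3, 1] converge to 2/3. -/
theorem iterates_tendsto_two_thirds (x₀ : ℝ) (hx₀ : x₀ ∈ Set.Icc (2/3 : ℝ) 1) :
    Filter.Tendsto (fun n => (f (3/4))^[n] x₀) Filter.atTop (nhds (2/3)) := by
  have mem : ∀ n, (f (3/4))^[n] x₀ ∈ Set.Icc (2/3 : ℝ) 1 := by
    intro n; induction n with
    | zero => simpa using hx₀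
    | succ n ih => rw [Function.iterate_succ_apply']; exact (step_lemma ih).1
  have anti : Antitone (fun n => (f (3/4))^[n] x₀) := by
    apply antitone_nat_of_succ_le
    intro n
    rw [Function.iterate_succ_apply']
    exact (step_lemma (mem n)).2
  have bdd : BddBelow (Set.range fun n => (f (3/4))^[n] x₀) :=
    ⟨2/3, by rintro _ ⟨n, rfl⟩; exact (mem n).1⟩
  have htend := tendsto_atTop_ciInf anti bdd
  set L := ⨅ n, (f (3/4))^[n] x₀ with hL
  have hL1 : (2/3 : ℝ) ≤ L := le_ciInf fun n => (mem n).1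
  have hdL := denom_pos L
  have hcont : ContinuousAt (f (3/4)) L := by
    unfold f
    exact ContinuousAt.div (by fun_prop) (by fun_prop) (ne_of_gt hdL)
  have h1 : Filter.Tendsto (fun n => f (3/4) ((f (3/4))^[n] x₀)) Filter.atTop
      (nhds (f (3/4) L)) := hcont.tendsto.comp htend
  have h2 : Filter.Tendsto (fun n => f (3/4) ((f (3/4))^[n] x₀)) Filter.atTop (nhds L) := by
    have := htend.comp (Filter.tendsto_add_atTop_nat 1)
    simpa [Function.comp_def, Function.iterate_succ_apply'] using this
  have hfix : f (3/4) L = L := tendsto_nhds_unique h1 h2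
  have hLval : L = 2/3 := by
    unfold f at hfix
    rw [div_eq_iff (ne_of_gt hdL)] at hfix
    have hsq : L * ((3/4) * L - 1/2) ^ 2 = 0 := by linear_combination -hfix
    have hLpos : (0:ℝ) < L := lt_of_lt_of_le (by norm_num) hL1
    have h0 : ((3/4) * L - 1/2) ^ 2 = 0 := (mul_eq_zero.1 hsq).resolve_left (ne_of_gt hLpos)
    have := pow_eq_zero_iff (n := 2) (by norm_num) |>.1 h0
    linarith
  rw [← hLval]; exact htend
end

section
/- Let p = 3/4. Then for every initial frequency x₀ ∈ [0, 2/3), the sequence of iterates f_{3/4}^[n](x₀) converges to 0 as n → ∞; that is, for initial values below 2/3 the fixed point 2/3 is repellent and the infection is eliminated. -/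
/-- for p = 3/4, the iterates from any x₀ ∈ [0, 2/3) converge to 0. -/
theorem iterates_tendsto_zero_below_two_thirds (x₀ : ℝ)
    (hx₀ : x₀ ∈ Set.Ico (0:ℝ) (2/3)) :
    Filter.Tendsto (fun n => (f (3/4))^[n] x₀) Filter.atTop (nhds 0) := by
  obtain ⟨h0, h1⟩ := hx₀
  set g : ℝ := 1 - (3/4) * x₀ + ((3/4) * x₀) ^ 2 with hg
  have hgpos : 0 < g := by rw [hg]; nlinarith [sq_nonneg ((3/4)*x₀ - 1/2)]
  have hc1 : (3/4 : ℝ) / g < 1 := by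
    rw [div_lt_one hgpos, hg]
    nlinarith [mul_pos (by linarith : (0:ℝ) < 1/2 - 3/4*x₀) (by linarith : (0:ℝ) < 1/2 - 3/4*x₀)]
  have hc0 : 0 ≤ (3/4 : ℝ) / g := by positivity
  set c := (3/4 : ℝ) / g with hc
  have key : ∀ n, 0 ≤ (f (3/4))^[n] x₀ ∧ (f (3/4))^[n] x₀ ≤ c ^ n * x₀ := by
    intro n
    induction n with
    | zero => simp [h0]
    | succ n ih =>
      obtain ⟨ha0, ha1⟩ := ih
      have hxle : (f (3/4))^[n] x₀ ≤ x₀ := by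
        calc (f (3/4))^[n] x₀ ≤ c ^ n * x₀ := ha1
        _ ≤ 1 * x₀ := by
            apply mul_le_mul_of_nonneg_right _ h0
            exact pow_le_one₀ hc0 hc1.le
        _ = x₀ := one_mul x₀
      set x := (f (3/4))^[n] x₀ with hx
      have hgx : g ≤ 1 - (3/4) * x + ((3/4) * x) ^ 2 := by
        rw [hg]
        nlinarith [mul_nonneg (by linarith : (0:ℝ) ≤ x₀ - x) (by linarith : (0:ℝ) ≤ 1 - 3/4*(x₀+x))]
      have hgxpos : 0 < 1 - (3/4) * x + ((3/4) * x) ^ 2 := lt_of_lt_of_le hgpos hgx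
      rw [Function.iterate_succ_apply']
      constructor
      · unfold f; positivity
      · have hstep : f (3/4) x ≤ c * x := by
          have h' : (3/4) * x / (1 - (3/4) * x + ((3/4) * x) ^ 2) ≤ (3/4) * x / g :=
            div_le_div_of_nonneg_left (by positivity) hgpos hgx
          have h'' : (3/4) * x / g = c * x := by rw [hc]; ring
          calc f (3/4) x = (3/4) * x / (1 - (3/4) * x + ((3/4) * x) ^ 2) := rfl
          _ ≤ (3/4) * x / g := h'
          _ = c * x := h''
        calc f (3/4) x ≤ c * x := hstep
        _ ≤ c * (c ^ n * x₀) := mul_le_mul_of_nonneg_left ha1 hc0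
        _ = c ^ (n+1) * x₀ := by ring
  have h2 : Filter.Tendsto (fun n => c ^ n * x₀) Filter.atTop (nhds 0) := by
    have := tendsto_pow_atTop_nhds_zero_of_lt_one hc0 hc1
    simpa using this.mul_const x₀
  exact squeeze_zero (fun n => (key n).1) (fun n => (key n).2) h2
end

section
/- Let 3/4 < p < 1 and set x⁻ = (1 - √(4p-3))/(2p). Then for every initial frequency x₀ with 0 ≤ x₀ < x⁻, the sequence of iterates f_p^[n](x₀) converges to 0 as n → ∞; that is, any initial infected frequency below the threshold x⁻ leads to elimination of the Wolbachia infection. -/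
/-- for 3/4 < p < 1, any initial frequency x₀ with
0 ≤ x₀ < x⁻ = (1 - √(4p-3))/(2p) leads to elimination: the iterates converge to 0. -/
theorem iterates_tendsto_zero_below_threshold (p : ℝ) (hp : 3/4 < p) (hp1 : p < 1)
    (x₀ : ℝ) (hx₀ : 0 ≤ x₀) (hx₀' : x₀ < (1 - Real.sqrt (4*p - 3)) / (2*p)) :
    Filter.Tendsto (fun n => (f p)^[n] x₀) Filter.atTop (nhds 0) := by
  have hp0 : (0:ℝ) < p := by linarith
  set s := Real.sqrt (4*p - 3) with hs
  have hs0 : 0 ≤ s := Real.sqrt_nonneg _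
  have hs2 : s ^ 2 = 4*p - 3 := Real.sq_sqrt (by linarith)
  have h2p : (0:ℝ) < 2*p := by linarith
  have hkey : 2 * p * x₀ < 1 - s := by
    have := (lt_div_iff₀ h2p).mp hx₀'
    linarith
  set g₀ : ℝ := 1 - p * x₀ + (p * x₀) ^ 2 with hg₀def
  have hg₀ : p < g₀ := by nlinarith
  have hg₀pos : 0 < g₀ := by linarith
  set c : ℝ := p / g₀ with hcdef
  have hc0 : 0 ≤ c := le_of_lt (div_pos hp0 hg₀pos)
  have hc1 : c < 1 := (div_lt_one hg₀pos).mpr hg₀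
  have key : ∀ n, 0 ≤ (f p)^[n] x₀ ∧ (f p)^[n] x₀ ≤ c ^ n * x₀ := by
    intro n
    induction n with
    | zero => simpa using hx₀
    | succ n ih =>
      obtain ⟨hy0, hy⟩ := ih
      set y := (f p)^[n] x₀ with hydef
      have hcn : c ^ n ≤ 1 := pow_le_one₀ hc0 hc1.le
      have hyx : y ≤ x₀ := hy.trans (by nlinarith)
      have hgy : g₀ ≤ 1 - p * y + (p * y) ^ 2 := by
        have h2' : 0 ≤ 1 - p * (x₀ + y) := by nlinarith
        have hprod : 0 ≤ p * (x₀ - y) * (1 - p * (x₀ + y)) :=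
          mul_nonneg (mul_nonneg hp0.le (by linarith)) h2'
        nlinarith [hprod]
      have hgypos : 0 < 1 - p * y + (p * y) ^ 2 := lt_of_lt_of_le hg₀pos hgy
      have hfy0 : 0 ≤ f p y := div_nonneg (by positivity) hgypos.le
      have hfy : f p y ≤ c * y := by
        have : p * y / (1 - p * y + (p * y) ^ 2) ≤ p * y / g₀ :=
          div_le_div_of_nonneg_left (by positivity) hg₀pos hgy
        calc f p y ≤ p * y / g₀ := this
          _ = c * y := by rw [hcdef]; ring
      rw [Function.iterate_succ_apply']
      refine ⟨hfy0, hfy.trans ?_⟩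
      calc c * y ≤ c * (c ^ n * x₀) := by nlinarith
        _ = c ^ (n+1) * x₀ := by ring
  have hgeo : Filter.Tendsto (fun n => c ^ n * x₀) Filter.atTop (nhds 0) := by
    have := (tendsto_pow_atTop_nhds_zero_of_lt_one hc0 hc1).mul_const x₀
    simpa using this
  refine squeeze_zero (fun n => (key n).1) (fun n => (key n).2) hgeo
end
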